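/- Let 0 ≤ α < 1 and β > 1. A word w = w_1…w_n over the alphabet A = {0,1,…,λ} belongs to the language L^{α,β} of the (α,β)-shift if and only if for every k ∈ {1,…,n} one has a_1…a_{n−k+1} ⪯ w_k…w_n ⪯ b_1…b_{n−k+1} in the lexicographic order. -/

import Mathlib

open Filter Topology MeasureTheory ENNReal
open scoped Classical

noncomputable section

namespace AB

/-- The (α,β)-transformation `T(x) = βx + α − ⌊βx + α⌋`. -/
def T (α β : ℝ) (x : ℝ) : ℝ := β * x + α - ⌊β * x + α⌋

/-- `λ = ⌈α+β⌉ − 1`, as a natural number. -/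
def lamNat (α β : ℝ) : ℕ := (⌈α + β⌉ - 1).toNat

/-- The digit of `x ∈ [0,1)`: the index `k` with `x ∈ J_k`, namely `⌊βx + α⌋`. -/
def digit (α β : ℝ) (x : ℝ) : ℕ := (⌊β * x + α⌋).toNat

/-- The (α,β)-expansion of `x`. -/
def iSeq (α β : ℝ) (x : ℝ) : ℕ → ℕ := fun n => digit α β ((T α β)^[n] x)

/-- The one-sided (α,β)-shift: closure (in the product topology) of the set of expansions. -/
def Xab (α β : ℝ) : Set (ℕ → ℕ) :=
  closure {s | ∃ x ∈ Set.Ico (0 : ℝ) 1, s = iSeq α β x}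

/-- Word of given length read in a one-sided sequence starting at position `k`. -/
def wordN (s : ℕ → ℕ) (k len : ℕ) : List ℕ := (List.range len).map fun i => s (k + i)

/-- The language of the (α,β)-shift: finite words appearing in points of `Xab`. -/
def Lang (α β : ℝ) : Set (List ℕ) :=
  {w | ∃ s ∈ Xab α β, ∃ k : ℕ, w = wordN s k w.length}

/-- `a = i_{α,β}(0)`. -/
def aSeq (α β : ℝ) : ℕ → ℕ := iSeq α β 0

/-- The prefix of length `l` of a sequence, as a word. -/
def pre (s : ℕ → ℕ) (l : ℕ) : List ℕ := (List.range l).map s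

/-- Lexicographic (non-strict) order on words. -/
def wordLe (u v : List ℕ) : Prop := u = v ∨ List.Lex (· < ·) u v

/-- Lexicographic (non-strict) order on one-sided sequences. -/
def seqLe (x y : ℕ → ℕ) : Prop :=
  x = y ∨ ∃ n : ℕ, (∀ i < n, x i = y i) ∧ x n < y n

/-- The largest `k ≤ |w|` such that the length-`k` suffix of `w` equals the length-`k`
prefix of `s` (this is `k1` for `s = a` and `k2` for `s = b`). -/
def kk (s : ℕ → ℕ) (w : List ℕ) : ℕ :=
  Nat.findGreatest (fun k => w.drop (w.length - k) = pre s k) w.length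

/-- The set of finite prefixes of a sequence (`P^a`, `P^b`). -/
def Pset (s : ℕ → ℕ) : Set (List ℕ) := {u | ∃ l : ℕ, u = pre s l}

/-- The distinguished suffix `s(w)`. -/
def sWord (a b : ℕ → ℕ) (w : List ℕ) : List ℕ :=
  if kk b w < kk a w then w.drop (w.length - kk a w)
  else if kk a w < kk b w then w.drop (w.length - kk b w)
  else []

/-- The hat operation on `P = P^a ∪ P^b` (for `β > 3`, `α = 1/β`). -/
def hatP (a b : ℕ → ℕ) (lam : ℕ) (u : List ℕ) : List ℕ :=
  if u = [] then []
  else if u ∈ Pset a then u.dropLast ++ [u.getLast?.getD 0 + 1]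
  else if 3 ≤ u.getLast?.getD 0 then u.dropLast ++ [u.getLast?.getD 0 - 1]
  else
    (u.set (u.length - kk a u.dropLast - 2) (u.getD (u.length - kk a u.dropLast - 2) 0 - 1)).set
      (u.length - kk a u.dropLast - 1) (lam - 1)

/-- `ŵ` for `w = v·s(w)`: replace the distinguished suffix by its hat. -/
def hatW (a b : ℕ → ℕ) (lam : ℕ) (w : List ℕ) : List ℕ :=
  w.take (w.length - (sWord a b w).length) ++ hatP a b lam (sWord a b w)

/-- `w̃`: the hat operation applied twice. -/
def tildeW (a b : ℕ → ℕ) (lam : ℕ) (w : List ℕ) : List ℕ :=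
  hatW a b lam (hatW a b lam w)

/-- `z(u)` for `u ∈ P^b`. -/
def zP (a b : ℕ → ℕ) (u : List ℕ) : ℕ :=
  if u = [] then 0
  else sSup ({k : ℕ | (u ++ pre (fun i => a (kk a u + i)) k) ∈ Pset b} ∪ {0})

/-- `z(w)` for a word `w` in the language. -/
def zW (a b : ℕ → ℕ) (w : List ℕ) : ℕ :=
  if kk a w < kk b w then zP a b (w.drop (w.length - kk b w)) else 0

/-- `z̄(n) = max{z(u) : u prefix of b, |u| ≤ n}`. -/
def zbar (a b : ℕ → ℕ) (n : ℕ) : ℕ :=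
  (Finset.range (n + 1)).sup fun l => zP a b (pre b l)

/-- The natural extension `Σ^{α,β}`. -/
def SigmaAB (α β : ℝ) : Set (ℤ → ℕ) :=
  {x | ∀ k : ℤ, (fun n : ℕ => x (k + n)) ∈ Xab α β}

/-- `σ^j` on two-sided sequences. -/
def shiftI {A : Type*} (j : ℤ) (x : ℤ → A) : ℤ → A := fun n => x (n + j)

/-- Word of given length read in a two-sided sequence starting at position `k`. -/
def wordZ (x : ℤ → ℕ) (k : ℤ) (len : ℕ) : List ℕ := (List.range len).map fun i => x (k + i)

/-- The map `g : L^{α,β} → {0,1}`. -/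
def gW (a b : ℕ → ℕ) (w : List ℕ) : ℕ :=
  if kk a w = 0 ∧ 0 < kk b w ∧ b (kk b w) ≤ 1 then 0 else 1

/-- `w^♯`: the word `w` placed at positions `k,…,k+|w|−1`, followed by `g(w)` at
position `k+|w|`, and `1` at all other positions. -/
def wSharp (a b : ℕ → ℕ) (k : ℤ) (w : List ℕ) : ℤ → ℕ :=
  fun j => if k ≤ j ∧ j < k + w.length then w.getD (j - k).toNat 1
           else if j = k + w.length then gW a b w else 1

/-- The finite approximation sets `E^n ⊆ Σ^{α,β}`. -/
def En (α β : ℝ) (b : ℕ → ℕ) (n : ℕ) : Set (ℤ → ℕ) :=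
  {x | wordZ x (-(n : ℤ)) (2 * n + 1) ∈ Lang α β ∧
       x ((n : ℤ) + 1) = gW (aSeq α β) b (wordZ x (-(n : ℤ)) (2 * n + 1)) ∧
       ∀ j : ℤ, j < -(n : ℤ) ∨ (n : ℤ) + 1 < j → x j = 1}

/-- `s(x_k^-) = ε` for the left-infinite word `x_{(-∞,k-1]}`: no nonempty suffix of it is a
prefix of `a` or of `b`. -/
def leftStar (a b : ℕ → ℕ) (x : ℤ → ℕ) (k : ℤ) : Prop :=
  (∀ K : ℕ, 1 ≤ K → ¬ ∀ i : ℕ, i < K → x (k - K + i) = a i) ∧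
  (∀ K : ℕ, 1 ≤ K → ¬ ∀ i : ℕ, i < K → x (k - K + i) = b i)

/-- `E^n_{[k,l]}(v)`. -/
def EnCyl (α β : ℝ) (b : ℕ → ℕ) (n : ℕ) (k l : ℤ) (v : List ℕ) : Set (ℤ → ℕ) :=
  {x ∈ En α β b n | wordZ x k (l - k + 1).toNat = v}

/-- `E^{*,n}_{[k,l]}(v)`. -/
def EnCylStar (α β : ℝ) (b : ℕ → ℕ) (n : ℕ) (k l : ℤ) (v : List ℕ) : Set (ℤ → ℕ) :=
  {x ∈ EnCyl α β b n k l v | leftStar (aSeq α β) b x k}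

/-- The Birkhoff sum `∑_{j=−n}^{n} φ(σ^j x)`. -/
def birkhoff (φ : (ℤ → ℕ) → ℝ) (n : ℕ) (x : ℤ → ℕ) : ℝ :=
  ∑ j ∈ Finset.Icc (-(n : ℤ)) (n : ℤ), φ (shiftI j x)

/-- `Ξ^n_{[k,l]}(v)`. -/
def Xi (α β : ℝ) (b : ℕ → ℕ) (φ : (ℤ → ℕ) → ℝ) (n : ℕ) (k l : ℤ) (v : List ℕ) : ℝ :=
  ∑' x : (EnCyl α β b n k l v), Real.exp (birkhoff φ n x.1)

/-- `Ξ^{*,n}_{[k,l]}(v)`. -/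
def XiStar (α β : ℝ) (b : ℕ → ℕ) (φ : (ℤ → ℕ) → ℝ) (n : ℕ) (k l : ℤ) (v : List ℕ) : ℝ :=
  ∑' x : (EnCylStar α β b n k l v), Real.exp (birkhoff φ n x.1)

/-- `δ_i(f)`, as an extended nonnegative real. -/
def oscE {A : Type*} (f : (ℤ → A) → ℝ) (i : ℤ) : ℝ≥0∞ :=
  ⨆ (x : ℤ → A) (y : ℤ → A) (_ : ∀ k : ℤ, k ≠ i → x k = y k), ENNReal.ofReal |f x - f y|

/-- `‖f‖_δ` for a function on the full shift. -/
def enormFull {A : Type*} (f : (ℤ → A) → ℝ) : ℝ≥0∞ := ∑' i : ℤ, oscE f i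

/-- `‖f‖_δ` for a function on a subshift `X`: infimum over continuous extensions. -/
def enormOn {A : Type*} [TopologicalSpace A] (X : Set (ℤ → A)) (f : (ℤ → A) → ℝ) : ℝ≥0∞ :=
  ⨅ (g : (ℤ → A) → ℝ) (_ : Continuous g) (_ : ∀ x ∈ X, g x = f x), enormFull g

/-- `f` has bounded total oscillations on `X` (i.e. `f ∈ B(X)`). -/
def BTO {A : Type*} [TopologicalSpace A] (X : Set (ℤ → A)) (f : (ℤ → A) → ℝ) : Prop :=
  ContinuousOn f X ∧ enormOn X f ≠ ⊤

/-- The real value of `‖f‖_δ`. -/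
def dnorm {A : Type*} [TopologicalSpace A] (X : Set (ℤ → A)) (f : (ℤ → A) → ℝ) : ℝ :=
  (enormOn X f).toReal

/-- The pressure `p(φ)`. -/
def pressure (α β : ℝ) (b : ℕ → ℕ) (φ : (ℤ → ℕ) → ℝ) : ℝ :=
  limUnder atTop fun n : ℕ =>
    Real.log (∑' x : (En α β b n), Real.exp (birkhoff φ n x.1)) / (2 * n + 1)

/-- `ν` is a tangent functional to the pressure at `φ` (an equilibrium measure for `φ`). -/
def IsTangent (α β : ℝ) (b : ℕ → ℕ) (φ : (ℤ → ℕ) → ℝ) (ν : Measure (ℤ → ℕ)) : Prop :=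
  ∀ f : (ℤ → ℕ) → ℝ, ContinuousOn f (SigmaAB α β) →
    pressure α β b φ + ∫ x, f x ∂ν ≤ pressure α β b (fun x => φ x + f x)

/-- The cylinder `[x_1 … x_m]` in `Σ^{α,β}`. -/
def cyl (α β : ℝ) (x : ℤ → ℕ) (m : ℕ) : Set (ℤ → ℕ) :=
  {y ∈ SigmaAB α β | ∀ i : ℕ, 1 ≤ i → i ≤ m → y (i : ℤ) = x (i : ℤ)}

/-- `ν` is a weak Gibbs measure for `ψ` on `Σ^{α,β}`. -/
def WeakGibbs (α β : ℝ) (ν : Measure (ℤ → ℕ)) (ψ : (ℤ → ℕ) → ℝ) : Prop :=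
  ∀ δ : ℝ, 0 < δ → ∃ N : ℕ, ∀ m : ℕ, N ≤ m → ∀ x ∈ SigmaAB α β,
    |Real.log (ν (cyl α β x m)).toReal / m -
      (∑ l ∈ Finset.Icc (1 : ℤ) (m : ℤ), ψ (shiftI l x)) / m| ≤ δ


/-- Concatenation `w·x` of a word and a one-sided sequence. -/
def wordApp (w : List ℕ) (x : ℕ → ℕ) : ℕ → ℕ :=
  fun n => if n < w.length then w.getD n 1 else x (n - w.length)

/-- `σ^k` on one-sided sequences. -/
def shiftN (k : ℕ) (s : ℕ → ℕ) : ℕ → ℕ := fun n => s (k + n)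

end AB

namespace AB

/-!
Digit sequences are lexicographically monotone in `x`, so a word read along an orbit lies,
together with all its suffixes, between the prefixes of `a = i(0)` and of
`b = lim_{x↑1} i(x)`. Conversely, an admissible word `d :: w` is realised by induction on its
length: the cylinder of `w` is an order-interval, so the bounds coming from `a` and `b` allow
moving a point `x` of it into `[α - d, β + α - d)`, the image of the `d`-th branch of `T`, and
`(x + d - α) / β` then realises `d :: w`.
-/

def IsAdmissible (a b : ℕ → ℕ) (w : List ℕ) : Prop :=
  ∀ v, v <:+ w → pre a v.length ≤ v ∧ v ≤ pre b v.length

lemma wordLe_iff_le {u v : List ℕ} : wordLe u v ↔ u ≤ v := le_iff_eq_or_lt.symm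

lemma cons_le_cons_iff {γ : Type*} [LinearOrder γ] {a b : γ} {u v : List γ} :
    a :: u ≤ b :: v ↔ a < b ∨ a = b ∧ u ≤ v := by
  simp only [le_iff_lt_or_eq, List.cons_lt_cons_iff, List.cons.injEq]
  grind

@[simp]
lemma length_pre (s : ℕ → ℕ) (n : ℕ) : (pre s n).length = n := by simp [pre]

lemma pre_succ (s : ℕ → ℕ) (n : ℕ) : pre s (n + 1) = s 0 :: pre (fun i => s (i + 1)) n := by
  simp [pre, List.range_succ_eq_map, Function.comp_def]

lemma drop_pre (s : ℕ → ℕ) (n j : ℕ) : (pre s n).drop j = pre (fun i => s (j + i)) (n - j) := by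
  apply List.ext_getElem <;> simp [pre]

lemma wordN_eq_pre (s : ℕ → ℕ) (k n : ℕ) : wordN s k n = pre (fun i => s (k + i)) n := rfl

lemma pre_eq_pre_iff {s t : ℕ → ℕ} {n : ℕ} : pre s n = pre t n ↔ ∀ i < n, s i = t i := by
  simp [pre, List.map_inj_left]

lemma isAdmissible_iff (a b : ℕ → ℕ) (w : List ℕ) :
    IsAdmissible a b w ↔ ∀ k : ℕ, 1 ≤ k → k ≤ w.length →
      wordLe (pre a (w.length - k + 1)) (w.drop (k - 1)) ∧
      wordLe (w.drop (k - 1)) (pre b (w.length - k + 1)) := by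
  constructor
  · intro h k hk1 hkn
    have hlen : (w.drop (k - 1)).length = w.length - k + 1 := by simp only [List.length_drop]; omega
    simpa only [wordLe_iff_le, hlen] using h _ (List.drop_suffix (k - 1) w)
  · intro h v hv
    rcases eq_or_ne v [] with rfl | hv0
    · simp [pre]
    have hvw := hv.length_le
    have hvpos := List.length_pos_iff.2 hv0
    have hk := h (w.length - v.length + 1) (by omega) (by omega)
    rw [Nat.add_sub_cancel, ← List.suffix_iff_eq_drop.1 hv,
      show w.length - (w.length - v.length + 1) + 1 = v.length by omega] at hk
    simpa only [wordLe_iff_le] using hk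

lemma eventually_forall_lt_apply_eq (s : ℕ → ℕ) (n : ℕ) : ∀ᶠ t in 𝓝 s, ∀ i < n, t i = s i :=
  (Filter.eventually_all_finite (Set.finite_lt_nat n)).2 fun i _ =>
    (continuous_apply i).continuousAt.eventually_mem ((isOpen_discrete {s i}).mem_nhds rfl)

section Expansion

variable {α β : ℝ}

lemma T_mem_Ico (x : ℝ) : T α β x ∈ Set.Ico 0 1 := ⟨Int.fract_nonneg _, Int.fract_lt_one _⟩

lemma iterate_T_mem_Ico {x : ℝ} (hx : x ∈ Set.Ico 0 1) : ∀ k, (T α β)^[k] x ∈ Set.Ico 0 1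
  | 0 => hx
  | _ + 1 => by rw [Function.iterate_succ_apply']; exact T_mem_Ico _

lemma pre_iSeq_succ (x : ℝ) (n : ℕ) :
    pre (iSeq α β x) (n + 1) = digit α β x :: pre (iSeq α β (T α β x)) n := by
  rw [pre_succ]
  rfl

lemma drop_pre_iSeq (x : ℝ) (n j : ℕ) :
    (pre (iSeq α β x) n).drop j = pre (iSeq α β ((T α β)^[j] x)) (n - j) := by
  rw [drop_pre]
  simp only [iSeq, Nat.add_comm j, Function.iterate_add_apply]
  rfl

lemma wordN_iSeq (x : ℝ) (k n : ℕ) : wordN (iSeq α β x) k n = pre (iSeq α β ((T α β)^[k] x)) n := by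
  rw [wordN_eq_pre]
  simp only [iSeq, Nat.add_comm k, Function.iterate_add_apply]
  rfl

lemma T_eq_of_digit_eq {t : ℝ} {d : ℕ} (ht : 0 ≤ β * t + α) (h : digit α β t = d) :
    T α β t = β * t + α - d := by
  have hfl : ⌊β * t + α⌋ = d := by
    have := Int.floor_nonneg.2 ht
    unfold digit at h
    omega
  simp [T, hfl]

lemma lt_of_digit_lt {t : ℝ} {d : ℕ} (h : digit α β t < d) : β * t + α < d := by
  have : ⌊β * t + α⌋ < d := by unfold digit at h; omega
  exact_mod_cast Int.floor_lt.1 this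

lemma le_of_lt_digit {t : ℝ} {d : ℕ} (h : d < digit α β t) : (d : ℝ) + 1 ≤ β * t + α := by
  have : ((d + 1 : ℕ) : ℤ) ≤ ⌊β * t + α⌋ := by unfold digit at h; omega
  exact_mod_cast Int.le_floor.1 this

variable (hα0 : 0 ≤ α) (hβ : 0 < β)
include hα0 hβ

lemma pre_iSeq_mono (n : ℕ) {x y : ℝ} (hx : 0 ≤ x) (hxy : x ≤ y) :
    pre (iSeq α β x) n ≤ pre (iSeq α β y) n := by
  induction n generalizing x y with
  | zero => exact le_rfl
  | succ n ih =>
    rw [pre_iSeq_succ, pre_iSeq_succ, cons_le_cons_iff]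
    have hdig : digit α β x ≤ digit α β y :=
      Int.toNat_le_toNat (Int.floor_le_floor (by nlinarith))
    rcases hdig.lt_or_eq with hlt | heq
    · exact Or.inl hlt
    · have hTx := T_eq_of_digit_eq (β := β) (t := x) (by positivity) rfl
      have hTy := T_eq_of_digit_eq (by nlinarith) heq.symm
      exact Or.inr ⟨heq, ih (T_mem_Ico x).1 (by rw [hTx, hTy]; nlinarith)⟩

lemma pre_iSeq_max_eq (n : ℕ) {x z : ℝ} (hx : 0 ≤ x)
    (h : pre (iSeq α β z) n ≤ pre (iSeq α β x) n) :
    pre (iSeq α β (max x z)) n = pre (iSeq α β x) n := by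
  rcases le_total x z with hxz | hzx
  · rw [max_eq_right hxz]
    exact le_antisymm h (pre_iSeq_mono hα0 hβ n hx hxz)
  · rw [max_eq_left hzx]

lemma pre_iSeq_min_eq (n : ℕ) {x z : ℝ} (hz : 0 ≤ z)
    (h : pre (iSeq α β x) n ≤ pre (iSeq α β z) n) :
    pre (iSeq α β (min x z)) n = pre (iSeq α β x) n := by
  rcases le_total x z with hxz | hzx
  · rw [min_eq_left hxz]
  · rw [min_eq_right hzx]
    exact le_antisymm (pre_iSeq_mono hα0 hβ n hz hzx) h

omit hα0 in
lemma pre_iSeq_branch_inv {x : ℝ} (hx : x ∈ Set.Ico 0 1) (d n : ℕ) :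
    pre (iSeq α β ((x + d - α) / β)) (n + 1) = d :: pre (iSeq α β x) n := by
  have hlin : β * ((x + d - α) / β) + α = x + d := by field_simp; ring
  have hfl : ⌊β * ((x + d - α) / β) + α⌋ = d := by
    rw [hlin, Int.floor_eq_iff]
    push_cast
    constructor <;> linarith [hx.1, hx.2]
  have hT : T α β ((x + d - α) / β) = x := by rw [T, hfl, hlin]; push_cast; ring
  rw [pre_iSeq_succ, hT]
  simp [digit, hfl]

end Expansion

section Language

variable {α β : ℝ}

lemma mem_Lang_iff (w : List ℕ) :
    w ∈ Lang α β ↔ ∃ x ∈ Set.Ico 0 1, pre (iSeq α β x) w.length = w := by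
  constructor
  · rintro ⟨s, hs, k, hw⟩
    obtain ⟨_, ⟨x, hx, rfl⟩, hxs⟩ := ((mem_closure_iff_frequently.1 hs).and_eventually
      (eventually_forall_lt_apply_eq s (k + w.length))).exists
    refine ⟨(T α β)^[k] x, iterate_T_mem_Ico hx k, ?_⟩
    conv_rhs => rw [hw]
    rw [← wordN_iSeq, wordN_eq_pre, wordN_eq_pre]
    exact pre_eq_pre_iff.2 fun i hi => hxs (k + i) (by omega)
  · rintro ⟨x, hx, hxw⟩
    refine ⟨iSeq α β x, subset_closure ⟨x, hx, rfl⟩, 0, ?_⟩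
    rw [wordN_iSeq, Function.iterate_zero_apply, hxw]

lemma eventually_pre_iSeq_eq {b : ℕ → ℕ} (hb : Tendsto (iSeq α β) (𝓝[<] (1 : ℝ)) (𝓝 b))
    (n : ℕ) : ∀ᶠ y in 𝓝[<] (1 : ℝ), pre (iSeq α β y) n = pre b n :=
  (hb.eventually (eventually_forall_lt_apply_eq b n)).mono fun _ h => pre_eq_pre_iff.2 h

variable (hα0 : 0 ≤ α) (hβ : 0 < β) {b : ℕ → ℕ} (hb : Tendsto (iSeq α β) (𝓝[<] (1 : ℝ)) (𝓝 b))
include hα0 hβ hb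

lemma pre_iSeq_le_pre_of_tendsto {z : ℝ} (hz : z ∈ Set.Ico 0 1) (n : ℕ) :
    pre (iSeq α β z) n ≤ pre b n := by
  obtain ⟨y, hyb, hzy⟩ := ((eventually_pre_iSeq_eq hb n).and (Ioo_mem_nhdsLT hz.2)).exists
  exact hyb ▸ pre_iSeq_mono hα0 hβ n hz.1 hzy.1.le

lemma isAdmissible_pre_iSeq {x : ℝ} (hx : x ∈ Set.Ico 0 1) (n : ℕ) :
    IsAdmissible (aSeq α β) b (pre (iSeq α β x) n) := by
  intro v hv
  obtain ⟨j, rfl⟩ : ∃ j, v = (pre (iSeq α β x) n).drop j := ⟨_, List.suffix_iff_eq_drop.1 hv⟩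
  have hxj := iterate_T_mem_Ico (α := α) (β := β) hx j
  rw [drop_pre_iSeq, length_pre]
  exact ⟨pre_iSeq_mono hα0 hβ _ le_rfl hxj.1, pre_iSeq_le_pre_of_tendsto hα0 hβ hb hxj _⟩

omit hb in
lemma exists_pre_iSeq_eq_cons {n d : ℕ} {w : List ℕ} {x y : ℝ} (hx : x ∈ Set.Ico 0 1)
    (hxw : pre (iSeq α β x) n = w) (hy : y ∈ Set.Ico 0 1)
    (hlo : pre (aSeq α β) (n + 1) ≤ d :: w) (hhi : d :: w ≤ pre (iSeq α β y) (n + 1)) :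
    ∃ x ∈ Set.Ico 0 1, pre (iSeq α β x) (n + 1) = d :: w := by
  subst hxw
  obtain ⟨x₁, hx₁, hdx₁, hx₁w⟩ : ∃ x₁ ∈ Set.Ico (0 : ℝ) 1, α - d ≤ x₁ ∧
      pre (iSeq α β x₁) n = pre (iSeq α β x) n := by
    rw [aSeq, pre_iSeq_succ, cons_le_cons_iff] at hlo
    rcases hlo with hlt | ⟨heq, hle⟩
    · have := lt_of_digit_lt hlt
      exact ⟨x, hx, by linarith [hx.1], rfl⟩
    · refine ⟨max x (T α β 0), ⟨le_max_of_le_left hx.1, max_lt hx.2 (T_mem_Ico 0).2⟩,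
        le_max_of_le_right ?_, pre_iSeq_max_eq hα0 hβ _ hx.1 hle⟩
      rw [T_eq_of_digit_eq (by linarith) heq]
      linarith
  obtain ⟨x₂, hx₂, hdx₂, hx₂d, hx₂w⟩ : ∃ x₂ ∈ Set.Ico (0 : ℝ) 1, α - d ≤ x₂ ∧ x₂ < β + α - d ∧
      pre (iSeq α β x₂) n = pre (iSeq α β x) n := by
    rw [pre_iSeq_succ, cons_le_cons_iff] at hhi
    rcases hhi with hlt | ⟨heq, hle⟩
    · have := le_of_lt_digit hlt
      exact ⟨x₁, hx₁, hdx₁, by nlinarith [hx₁.2, hy.2], hx₁w⟩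
    · have hTy := T_eq_of_digit_eq (by nlinarith [hy.1]) heq.symm
      refine ⟨min x₁ (T α β y), ⟨le_min hx₁.1 (T_mem_Ico y).1, min_lt_of_left_lt hx₁.2⟩,
        le_min hdx₁ (by nlinarith [hy.1]), min_lt_of_right_lt (by nlinarith [hy.2]), ?_⟩
      rw [pre_iSeq_min_eq hα0 hβ _ (T_mem_Ico y).1 (hx₁w ▸ hle), hx₁w]
  refine ⟨(x₂ + d - α) / β, ⟨?_, ?_⟩, by rw [pre_iSeq_branch_inv hβ hx₂, hx₂w]⟩
  · exact div_nonneg (by linarith) hβ.le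
  · rw [div_lt_one hβ]
    linarith

lemma exists_pre_iSeq_eq_of_isAdmissible :
    ∀ w : List ℕ, IsAdmissible (aSeq α β) b w → ∃ x ∈ Set.Ico 0 1, pre (iSeq α β x) w.length = w
  | [], _ => ⟨0, ⟨le_rfl, one_pos⟩, rfl⟩
  | d :: w, hw => by
    obtain ⟨x, hx, hxw⟩ := exists_pre_iSeq_eq_of_isAdmissible w fun v hv =>
      hw v (hv.trans (List.suffix_cons d w))
    obtain ⟨y, hyb, hy⟩ :=
      ((eventually_pre_iSeq_eq hb (w.length + 1)).and (Ioo_mem_nhdsLT one_pos)).exists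
    obtain ⟨hlo, hhi⟩ := hw _ List.suffix_rfl
    exact exists_pre_iSeq_eq_cons hα0 hβ hx hxw ⟨hy.1.le, hy.2⟩ hlo (hhi.trans_eq hyb.symm)

end Language

theorem stmt0_general (α β : ℝ) (hα0 : 0 ≤ α) (hβ : 1 < β)
    (b : ℕ → ℕ) (hb : Tendsto (iSeq α β) (𝓝[<] (1 : ℝ)) (𝓝 b))
    (w : List ℕ) :
    w ∈ Lang α β ↔
      ∀ k : ℕ, 1 ≤ k → k ≤ w.length →
        wordLe (pre (aSeq α β) (w.length - k + 1)) (w.drop (k - 1)) ∧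
        wordLe (w.drop (k - 1)) (pre b (w.length - k + 1)) := by
  have hβ0 : 0 < β := zero_lt_one.trans hβ
  rw [← isAdmissible_iff, mem_Lang_iff]
  constructor
  · rintro ⟨x, hx, hxw⟩
    exact hxw ▸ isAdmissible_pre_iSeq hα0 hβ0 hb hx _
  · exact exists_pre_iSeq_eq_of_isAdmissible hα0 hβ0 hb w

/-- lexicographic characterization of the language of the (α,β)-shift. -/
theorem stmt0 (α β : ℝ) (hα0 : 0 ≤ α) (hα1 : α < 1) (hβ : 1 < β)
    (b : ℕ → ℕ) (hb : Tendsto (iSeq α β) (𝓝[<] (1 : ℝ)) (𝓝 b))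
    (w : List ℕ) (hw : ∀ c ∈ w, c ≤ lamNat α β) :
    w ∈ Lang α β ↔
      ∀ k : ℕ, 1 ≤ k → k ≤ w.length →
        wordLe (pre (aSeq α β) (w.length - k + 1)) (w.drop (k - 1)) ∧
        wordLe (w.drop (k - 1)) (pre b (w.length - k + 1)) :=
  stmt0_general α β hα0 hβ b hb w

end AB
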